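/- Let A be a continuous dcpo, let Total(A) be the set of maximal elements of A, and for x ∈ A define I_x = {y ∈ A | the pair {x,y} has no upper bound in A} and J_x = {y ∈ A | x ∈ Int(I_y)}, where Int denotes Scott interior. Then the following are equivalent: (1) for every x ∈ A, I_x ∩ Total(A) = Int(I_x) ∩ Total(A) (the order-theoretic form of the Lawson condition); (2) for every x ∈ Total(A), J_x = I_x. Moreover, under these equivalent conditions, for every x ∈ Total(A) one has C_x ∪ J_x = C_x ∪ Int(J_x) = A, where C_x = {y ∈ A | y ⊑ x}. -/

import Mathlib

/-- `x` is way below `y`: for every nonempty directed set `S` possessing a least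
upper bound `b` with `y ≤ b`, there is `s ∈ S` with `x ≤ s`. -/
def wayBelow {α : Type*} [Preorder α] (x y : α) : Prop :=
  ∀ S : Set α, S.Nonempty → DirectedOn (· ≤ ·) S → ∀ b : α, IsLUB S b → y ≤ b → ∃ s ∈ S, x ≤ s

/-- A directed complete partial order: every directed subset (including `∅`,
so there is a least element) has a least upper bound. -/
def IsDcpo (α : Type*) [Preorder α] : Prop :=
  ∀ S : Set α, DirectedOn (· ≤ ·) S → ∃ b, IsLUB S b

/-- Bounded completeness: every subset with an upper bound has a least upper bound. -/
def BoundedComplete (α : Type*) [Preorder α] : Prop :=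
  ∀ S : Set α, (∃ b, ∀ s ∈ S, s ≤ b) → ∃ m, IsLUB S m

/-- Algebraicity: for every element `a`, the set of compact elements below `a` is
(nonempty and) directed with least upper bound `a`. -/
def IsAlgebraicDom (α : Type*) [Preorder α] : Prop :=
  ∀ a : α, ({k : α | wayBelow k k ∧ k ≤ a}).Nonempty ∧
    DirectedOn (· ≤ ·) {k : α | wayBelow k k ∧ k ≤ a} ∧
    IsLUB {k : α | wayBelow k k ∧ k ≤ a} a

/-- `K` is a basis of a continuous dcpo: for every `a`, the set of elements of `K`
way below `a` is (nonempty and) directed with least upper bound `a`. -/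
def IsDomBasis {α : Type*} [Preorder α] (K : Set α) : Prop :=
  ∀ a : α, ({k ∈ K | wayBelow k a}).Nonempty ∧
    DirectedOn (· ≤ ·) {k ∈ K | wayBelow k a} ∧
    IsLUB {k ∈ K | wayBelow k a} a

/-- Scott open sets: upper sets inaccessible by least upper bounds of nonempty
directed sets. -/
def ScottOpen {α : Type*} [Preorder α] (U : Set α) : Prop :=
  (∀ x ∈ U, ∀ y, x ≤ y → y ∈ U) ∧
  ∀ S : Set α, S.Nonempty → DirectedOn (· ≤ ·) S → ∀ b : α, IsLUB S b → b ∈ U → ∃ s ∈ S, s ∈ U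

/-- Interior in the Scott topology: the largest Scott open subset. -/
def scottInt {α : Type*} [Preorder α] (B : Set α) : Set α :=
  ⋃₀ {U : Set α | ScottOpen U ∧ U ⊆ B}

/-- Negative information about `x`: the elements inconsistent with `x`
(the pair has no upper bound). -/
def negSet {α : Type*} [Preorder α] (x : α) : Set α :=
  {y | ¬∃ b, x ≤ b ∧ y ≤ b}

/-- `J_x = {y | x ∈ Int (I_y)}`, the continuous approximation of `I_x = negSet x`. -/
def jSet {α : Type*} [Preorder α] (x : α) : Set α :=
  {y | x ∈ scottInt (negSet y)}

/-- The set of total (maximal) elements. -/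
def TotalElems (α : Type*) [Preorder α] : Set α := {x | ∀ y, x ≤ y → y = x}

/-!
The equivalence is pure bookkeeping with the symmetry `y ∈ I_x ↔ x ∈ I_y` and `Int(I_y) ⊆ I_y`.
For the covering statement, let `x` be total and `y ⋢ x`. Since `y` is the supremum of the basis
elements way below it, some basis element `k ≪ y` has `k ⋢ x`; maximality of `x` puts `k` in
`I_x = J_x`. As `J_x` is an upper set, the Scott open set `↟k = {z | k ≪ z}` (open by
interpolation) is a neighbourhood of `y` inside `J_x`, so `y ∈ Int(J_x)`.
-/

section Domain

variable {α : Type*} [Preorder α]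

theorem wayBelow.le {x y : α} (h : wayBelow x y) : x ≤ y := by
  obtain ⟨s, rfl, hxs⟩ := h {y} (Set.singleton_nonempty y)
    (fun a ha b hb => ⟨y, rfl, le_of_eq ha, le_of_eq hb⟩) y isLUB_singleton le_rfl
  exact hxs

theorem wayBelow.of_le_left {x y z : α} (hxy : x ≤ y) (h : wayBelow y z) : wayBelow x z :=
  fun S hS hdir b hb hzb =>
    let ⟨s, hs, hys⟩ := h S hS hdir b hb hzb
    ⟨s, hs, hxy.trans hys⟩

theorem wayBelow.of_le_right {x y z : α} (h : wayBelow x y) (hyz : y ≤ z) : wayBelow x z :=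
  fun S hS hdir b hb hzb => h S hS hdir b hb (hyz.trans hzb)

theorem IsDomBasis.exists_wayBelow_wayBelow {K : Set α} (hK : IsDomBasis K) {k b : α}
    (h : wayBelow k b) : ∃ c ∈ K, wayBelow k c ∧ wayBelow c b := by
  -- `k ≪ b` applied to the directed set `M` of basis elements way below some basis element `≪ b`
  set M : Set α := {c | c ∈ K ∧ ∃ c' ∈ K, wayBelow c c' ∧ wayBelow c' b}
  obtain ⟨⟨c₀, hc₀⟩, hdir_b, hlub_b⟩ := hK b
  have hM_nonempty : M.Nonempty := by
    obtain ⟨⟨c, hc⟩, -, -⟩ := hK c₀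
    exact ⟨c, hc.1, c₀, hc₀.1, hc.2, hc₀.2⟩
  have hM_directed : DirectedOn (· ≤ ·) M := by
    rintro c₁ ⟨-, c₁', hc₁', h₁, h₁b⟩ c₂ ⟨-, c₂', hc₂', h₂, h₂b⟩
    obtain ⟨c₃, hc₃, h₁₃, h₂₃⟩ := hdir_b c₁' ⟨hc₁', h₁b⟩ c₂' ⟨hc₂', h₂b⟩
    obtain ⟨hne, hdir, hlub⟩ := hK c₃
    obtain ⟨d₁, hd₁, hcd₁⟩ := (h₁.of_le_right h₁₃) _ hne hdir c₃ hlub le_rfl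
    obtain ⟨d₂, hd₂, hcd₂⟩ := (h₂.of_le_right h₂₃) _ hne hdir c₃ hlub le_rfl
    obtain ⟨d, hd, hd₁d, hd₂d⟩ := hdir d₁ hd₁ d₂ hd₂
    exact ⟨d, ⟨hd.1, c₃, hc₃.1, hd.2, hc₃.2⟩, hcd₁.trans hd₁d, hcd₂.trans hd₂d⟩
  have hM_lub : IsLUB M b := by
    refine ⟨?_, fun u hu => hlub_b.2 ?_⟩
    · rintro c ⟨-, c', -, hcc', hc'b⟩
      exact hcc'.le.trans hc'b.le
    · rintro c' ⟨hc'K, hc'b⟩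
      refine (hK c').2.2.2 ?_
      rintro c ⟨hcK, hcc'⟩
      exact hu ⟨hcK, c', hc'K, hcc', hc'b⟩
  obtain ⟨c, ⟨-, c', hc'K, hcc', hc'b⟩, hkc⟩ := h M hM_nonempty hM_directed b hM_lub le_rfl
  exact ⟨c', hc'K, hcc'.of_le_left hkc, hc'b⟩

theorem IsDomBasis.scottOpen_wayBelow {K : Set α} (hK : IsDomBasis K) (k : α) :
    ScottOpen {z | wayBelow k z} := by
  refine ⟨fun z hz w hzw => hz.of_le_right hzw, fun S hS hdir b hb hkb => ?_⟩
  obtain ⟨c, -, hkc, hcb⟩ := hK.exists_wayBelow_wayBelow hkb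
  obtain ⟨s, hs, hcs⟩ := hcb S hS hdir b hb le_rfl
  exact ⟨s, hs, hkc.of_le_right hcs⟩

theorem IsDomBasis.exists_wayBelow_not_le {K : Set α} (hK : IsDomBasis K) {x y : α}
    (hyx : ¬ y ≤ x) : ∃ k ∈ K, wayBelow k y ∧ ¬ k ≤ x := by
  by_contra! h
  exact hyx ((hK y).2.2.2 fun k hk => h k hk.1 hk.2)

theorem scottInt_subset (B : Set α) : scottInt B ⊆ B := by
  rintro x ⟨U, ⟨-, hUB⟩, hx⟩
  exact hUB hx

theorem ScottOpen.subset_scottInt {B U : Set α} (hU : ScottOpen U) (hUB : U ⊆ B) :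
    U ⊆ scottInt B :=
  fun _ hx => ⟨U, ⟨hU, hUB⟩, hx⟩

theorem scottInt_mono {B C : Set α} (h : B ⊆ C) : scottInt B ⊆ scottInt C := by
  rintro x ⟨U, ⟨hU, hUB⟩, hx⟩
  exact ⟨U, ⟨hU, hUB.trans h⟩, hx⟩

theorem mem_negSet_comm {x y : α} : y ∈ negSet x ↔ x ∈ negSet y :=
  not_congr ⟨fun ⟨b, hxb, hyb⟩ => ⟨b, hyb, hxb⟩, fun ⟨b, hyb, hxb⟩ => ⟨b, hxb, hyb⟩⟩

theorem negSet_mono {x z : α} (h : x ≤ z) : negSet x ⊆ negSet z :=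
  fun _ hw ⟨b, hzb, hwb⟩ => hw ⟨b, h.trans hzb, hwb⟩

theorem mem_negSet_of_not_le {x k : α} (hx : x ∈ TotalElems α) (hkx : ¬ k ≤ x) :
    k ∈ negSet x :=
  fun ⟨b, hxb, hkb⟩ => hkx (hx b hxb ▸ hkb)

theorem jSet_subset_negSet (x : α) : jSet x ⊆ negSet x :=
  fun _ hy => mem_negSet_comm.2 (scottInt_subset _ hy)

theorem mem_jSet_of_le {x y z : α} (hy : y ∈ jSet x) (hyz : y ≤ z) : z ∈ jSet x :=
  scottInt_mono (negSet_mono hyz) hy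

theorem lawson_iff_jSet_eq_negSet :
    (∀ x : α, negSet x ∩ TotalElems α = scottInt (negSet x) ∩ TotalElems α) ↔
      ∀ x ∈ TotalElems α, jSet x = negSet x := by
  constructor
  · intro hL x hx
    refine (jSet_subset_negSet x).antisymm fun y hy => ?_
    have : x ∈ scottInt (negSet y) ∩ TotalElems α := hL y ▸ ⟨mem_negSet_comm.1 hy, hx⟩
    exact this.1
  · intro hJ x
    refine (Set.inter_subset_inter_left _ (scottInt_subset _)).antisymm' ?_
    rintro y ⟨hy, hyT⟩
    have : x ∈ jSet y := hJ y hyT ▸ mem_negSet_comm.1 hy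
    exact ⟨this, hyT⟩

theorem IsDomBasis.mem_scottInt_jSet {K : Set α} (hK : IsDomBasis K) {x y : α}
    (hx : x ∈ TotalElems α) (hJ : jSet x = negSet x) (hyx : ¬ y ≤ x) :
    y ∈ scottInt (jSet x) := by
  obtain ⟨k, -, hky, hkx⟩ := hK.exists_wayBelow_not_le hyx
  have hk : k ∈ jSet x := hJ ▸ mem_negSet_of_not_le hx hkx
  exact (hK.scottOpen_wayBelow k).subset_scottInt (fun _ hz => mem_jSet_of_le hk hz.le) hky

end Domain

theorem stmt19_general {α : Type*} [PartialOrder α]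
    (K : Set α) (hK : IsDomBasis K) :
    ((∀ x : α, negSet x ∩ TotalElems α = scottInt (negSet x) ∩ TotalElems α) ↔
      (∀ x ∈ TotalElems α, jSet x = negSet x)) ∧
    ((∀ x : α, negSet x ∩ TotalElems α = scottInt (negSet x) ∩ TotalElems α) →
      ∀ x ∈ TotalElems α,
        {y : α | y ≤ x} ∪ jSet x = Set.univ ∧
        {y : α | y ≤ x} ∪ scottInt (jSet x) = Set.univ) := by
  refine ⟨lawson_iff_jSet_eq_negSet, fun hL x hx => ?_⟩
  have hJ : jSet x = negSet x := lawson_iff_jSet_eq_negSet.1 hL x hx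
  have hInt : {y : α | y ≤ x} ∪ scottInt (jSet x) = Set.univ :=
    Set.eq_univ_of_forall fun y => (em (y ≤ x)).imp id (hK.mem_scottInt_jSet hx hJ)
  refine ⟨Set.eq_univ_of_univ_subset ?_, hInt⟩
  exact hInt ▸ Set.union_subset_union_right _ (scottInt_subset _)

/-- for a continuous dcpo, the Lawson condition in the form
`∀ x, I_x ∩ Total = Int(I_x) ∩ Total` is equivalent to `∀ x ∈ Total, J_x = I_x`;
and under these conditions, `C_x ∪ J_x = C_x ∪ Int(J_x) = A` for every total `x`. -/
theorem stmt19 {α : Type*} [PartialOrder α]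
    (hd : IsDcpo α) (K : Set α) (hK : IsDomBasis K) :
    ((∀ x : α, negSet x ∩ TotalElems α = scottInt (negSet x) ∩ TotalElems α) ↔
      (∀ x ∈ TotalElems α, jSet x = negSet x)) ∧
    ((∀ x : α, negSet x ∩ TotalElems α = scottInt (negSet x) ∩ TotalElems α) →
      ∀ x ∈ TotalElems α,
        {y : α | y ≤ x} ∪ jSet x = Set.univ ∧
        {y : α | y ≤ x} ∪ scottInt (jSet x) = Set.univ) :=
  stmt19_general K hK
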